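/- arXiv:2008.03219 — 3 statements merged into one kernel-verified Lean document; each statement's English description precedes it below -/
import Mathlib

section
/- For a discrete-time linear control system on a Lie group G, the solution satisfies φ(k, g, u) = φ(k, e, u) · f₀^k(g) for all k ∈ ℕ, g ∈ G, and control sequences u. -/
/-- Solution map of a discrete-time control system `g_{k+1} = f (g_k) (u_k)` on a group. -/
def ctrlSol {G U : Type*} (f : G → U → G) (u : ℕ → U) : ℕ → G → G
  | 0, g => g
  | (k + 1), g => f (ctrlSol f u k g) (u k)

theorem linear_step_mul {G U : Type*} [Group G] (f : G → U → G) (u₀ : U)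
    (hauto : ∀ g h : G, f (g * h) u₀ = f g u₀ * f h u₀)
    (hlin : ∀ (u : U) (g : G), f g u = f 1 u * f g u₀) (u : U) (a b : G) :
    f (a * b) u = f a u * f b u₀ := by
  rw [hlin u (a * b), hauto, hlin u a, mul_assoc]

theorem solution_formula_linear_system_general {G U : Type*} [Group G]
    (f : G → U → G) (u₀ : U)
    (hauto : ∀ g h : G, f (g * h) u₀ = f g u₀ * f h u₀)
    (hlin : ∀ (u : U) (g : G), f g u = f 1 u * f g u₀) :
    ∀ (k : ℕ) (g : G) (u : ℕ → U),
      ctrlSol f u k g = ctrlSol f u k 1 * (fun g => f g u₀)^[k] g := by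
  intro k g u
  induction k with
  | zero => rw [ctrlSol, ctrlSol, one_mul, Function.iterate_zero_apply]
  | succ k ih =>
    rw [ctrlSol, ctrlSol, ih, linear_step_mul f u₀ hauto hlin, Function.iterate_succ_apply']

/-- For a discrete-time linear control system on a Lie group `G`
(`f₀ := f · u₀` is an automorphism and `f_u g = f_u e * f₀ g`), the solution satisfies
`φ(k, g, u) = φ(k, e, u) * f₀^k(g)` for all `k`, `g`, `u`. -/
theorem solution_formula_linear_system {G U : Type*} [Group G]
    (f : G → U → G) (u₀ : U)
    (hauto : ∀ g h : G, f (g * h) u₀ = f g u₀ * f h u₀)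
    (hbij : Function.Bijective (fun g => f g u₀))
    (hlin : ∀ (u : U) (g : G), f g u = f 1 u * f g u₀) :
    ∀ (k : ℕ) (g : G) (u : ℕ → U),
      ctrlSol f u k g = ctrlSol f u k 1 * (fun g => f g u₀)^[k] g :=
  solution_formula_linear_system_general f u₀ hauto hlin
end

section
/- Let T be a linear isomorphism of a finite-dimensional normed real vector space and let Z belong to the sum of generalized eigenspaces for eigenvalues of absolute value exactly 1. Then for every a > 0 and every σ ∈ (0,1), |Tⁿ Z| · σ^{a|n|} → 0 as n → ±∞. -/
/-!
Write `f x = α • x + w` for a generalized eigenvector `x` of `f` with `‖α‖ ≤ 1`, where `w` is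
killed by one power of `f - α` fewer than `x`. Then `‖fⁿ x‖ ≤ ‖x‖ + ∑_{i<n} ‖fⁱ w‖`, and
induction on the nilpotency order bounds `‖fⁿ x‖` by a polynomial in `n`, which the geometric
weight `(σ ^ a) ^ n` kills. This passes to sums of generalized eigenvectors. Negative times are
the forward orbit of `T⁻¹`, whose generalized eigenspace for `α⁻¹` contains that of `T` for `α`.
-/

open Filter Topology

theorem tendsto_add_one_pow_mul_pow_atTop_nhds_zero (k : ℕ) {r : ℝ} (hr : |r| < 1) :
    Tendsto (fun n : ℕ => ((n : ℝ) + 1) ^ k * r ^ n) atTop (𝓝 0) := by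
  have h := tendsto_finsetSum (Finset.range (k + 1)) fun j _ =>
    (tendsto_pow_const_mul_const_pow_of_abs_lt_one j hr).const_mul (k.choose j : ℝ)
  simp only [mul_zero, Finset.sum_const_zero] at h
  refine h.congr fun n => ?_
  rw [add_pow, Finset.sum_mul]
  refine Finset.sum_congr rfl fun j _ => ?_
  ring

section PolynomialGrowth

variable {𝕜 E : Type*} [NormedField 𝕜] [NormedAddCommGroup E] [NormedSpace 𝕜 E]
  {f : Module.End 𝕜 E} {α : 𝕜}

theorem norm_pow_apply_le_add_sum (hα : ‖α‖ ≤ 1) {x w : E} (hfx : f x = α • x + w) (n : ℕ) :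
    ‖(f ^ n) x‖ ≤ ‖x‖ + ∑ i ∈ Finset.range n, ‖(f ^ i) w‖ := by
  induction n with
  | zero => simp
  | succ n ih =>
    have hstep : (f ^ (n + 1)) x = α • (f ^ n) x + (f ^ n) w := by
      rw [pow_succ, Module.End.mul_apply, hfx, map_add, map_smul]
    have hsmul : ‖α • (f ^ n) x‖ ≤ ‖(f ^ n) x‖ :=
      (norm_smul_le _ _).trans (mul_le_of_le_one_left (norm_nonneg _) hα)
    calc ‖(f ^ (n + 1)) x‖ ≤ ‖(f ^ n) x‖ + ‖(f ^ n) w‖ := by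
          rw [hstep]; exact (norm_add_le _ _).trans (add_le_add hsmul le_rfl)
      _ ≤ _ := by rw [Finset.sum_range_succ]; linarith

theorem exists_norm_pow_apply_le_of_sub_smul_pow_apply_eq_zero (hα : ‖α‖ ≤ 1) (k : ℕ) {x : E}
    (hx : ((f - α • 1) ^ k) x = 0) :
    ∃ C, 0 ≤ C ∧ ∀ n : ℕ, ‖(f ^ n) x‖ ≤ C * ((n : ℝ) + 1) ^ k := by
  induction k generalizing x with
  | zero => exact ⟨0, le_rfl, fun n => by simp_all⟩
  | succ k ih =>
    set w := (f - α • 1) x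
    obtain ⟨C, hC0, hC⟩ := ih (x := w) (by rwa [← Module.End.mul_apply, ← pow_succ])
    have hfx : f x = α • x + w := by simp [w]
    refine ⟨‖x‖ + C, by positivity, fun n => ?_⟩
    have hn : (1 : ℝ) ≤ (n : ℝ) + 1 := le_add_of_nonneg_left n.cast_nonneg
    calc ‖(f ^ n) x‖ ≤ ‖x‖ + ∑ i ∈ Finset.range n, ‖(f ^ i) w‖ :=
          norm_pow_apply_le_add_sum hα hfx n
      _ ≤ ‖x‖ + ∑ i ∈ Finset.range n, C * ((n : ℝ) + 1) ^ k := by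
          gcongr with i hi
          refine (hC i).trans ?_
          gcongr
          exact_mod_cast (Finset.mem_range.mp hi).le
      _ = ‖x‖ + n * (C * ((n : ℝ) + 1) ^ k) := by simp
      _ ≤ (‖x‖ + C) * ((n : ℝ) + 1) ^ (k + 1) := by
          have hpow : 1 ≤ ((n : ℝ) + 1) ^ k := one_le_pow₀ hn
          have hx1 : ‖x‖ ≤ ‖x‖ * (((n : ℝ) + 1) ^ k * ((n : ℝ) + 1)) :=
            le_mul_of_one_le_right (norm_nonneg x) (one_le_mul_of_one_le_of_one_le hpow hn)
          rw [pow_succ]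
          nlinarith [mul_nonneg hC0 (zero_le_one.trans hpow)]

theorem tendsto_norm_pow_apply_mul_pow_of_mem_maxGenEigenspace (hα : ‖α‖ ≤ 1) {x : E}
    (hx : x ∈ f.maxGenEigenspace α) {r : ℝ} (hr0 : 0 ≤ r) (hr1 : r < 1) :
    Tendsto (fun n : ℕ => ‖(f ^ n) x‖ * r ^ n) atTop (𝓝 0) := by
  obtain ⟨k, hk⟩ := (f.mem_maxGenEigenspace α x).mp hx
  obtain ⟨C, -, hC⟩ := exists_norm_pow_apply_le_of_sub_smul_pow_apply_eq_zero hα k hk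
  have hlim := (tendsto_add_one_pow_mul_pow_atTop_nhds_zero k
    (abs_lt.mpr ⟨by linarith, hr1⟩)).const_mul C
  rw [mul_zero] at hlim
  refine squeeze_zero (fun n => by positivity) (fun n => ?_) hlim
  rw [← mul_assoc]
  exact mul_le_mul_of_nonneg_right (hC n) (pow_nonneg hr0 n)

theorem tendsto_norm_pow_apply_mul_pow_of_mem_iSup_maxGenEigenspace {x : E}
    (hx : x ∈ ⨆ (α : 𝕜) (_ : ‖α‖ ≤ 1), f.maxGenEigenspace α) {r : ℝ} (hr0 : 0 ≤ r)
    (hr1 : r < 1) : Tendsto (fun n : ℕ => ‖(f ^ n) x‖ * r ^ n) atTop (𝓝 0) := by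
  rw [iSup_subtype'] at hx
  refine Submodule.iSup_induction _ (motive := fun x =>
    Tendsto (fun n : ℕ => ‖(f ^ n) x‖ * r ^ n) atTop (𝓝 0)) hx ?_ ?_ ?_
  · exact fun α x hx => tendsto_norm_pow_apply_mul_pow_of_mem_maxGenEigenspace α.2 hx hr0 hr1
  · simp
  · intro x y hx hy
    refine squeeze_zero (fun n => by positivity) (fun n => ?_) (by simpa using hx.add hy)
    rw [map_add, ← add_mul]
    exact mul_le_mul_of_nonneg_right (norm_add_le _ _) (pow_nonneg hr0 n)

end PolynomialGrowth

theorem LinearEquiv.maxGenEigenspace_le_symm {K M : Type*} [Field K] [AddCommGroup M]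
    [Module K M]
    (e : M ≃ₗ[K] M) {α : K} (hα : α ≠ 0) :
    Module.End.maxGenEigenspace (e : Module.End K M) α ≤
      Module.End.maxGenEigenspace (e.symm : Module.End K M) α⁻¹ := by
  intro x hx
  obtain ⟨k, hk⟩ := (Module.End.mem_maxGenEigenspace _ _ _).mp hx
  have hfactor : (e.symm : Module.End K M) - α⁻¹ • 1 =
      (-α⁻¹) • (e.symm : Module.End K M) * (e - α • 1) := by
    ext y; simp [smul_sub, hα]
  have hcomm : Commute ((-α⁻¹) • (e.symm : Module.End K M)) (e - α • 1) := by
    refine Commute.smul_left (Commute.sub_right ?_ ((Commute.one_right _).smul_right α)) _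
    ext y; simp
  refine (Module.End.mem_maxGenEigenspace _ _ _).mpr ⟨k, ?_⟩
  rw [hfactor, hcomm.mul_pow, Module.End.mul_apply, hk, map_zero]

theorem LinearEquiv.iSup_maxGenEigenspace_le_symm {K M : Type*} [NormedField K] [AddCommGroup M]
    [Module K M] (e : M ≃ₗ[K] M) :
    ⨆ (α : K) (_ : ‖α‖ = 1), Module.End.maxGenEigenspace (e : Module.End K M) α ≤
      ⨆ (α : K) (_ : ‖α‖ = 1), Module.End.maxGenEigenspace (e.symm : Module.End K M) α :=
  iSup₂_le fun α hα => (e.maxGenEigenspace_le_symm (by rintro rfl; simp at hα)).trans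
    (le_iSup₂_of_le α⁻¹ (by simp [hα]) le_rfl)

theorem LinearEquiv.zpow_neg_natCast_apply {R M : Type*} [Semiring R] [AddCommMonoid M]
    [Module R M] (e : M ≃ₗ[R] M) (n : ℕ) (x : M) :
    (e ^ (-(n : ℤ))) x = ((e.symm : Module.End R M) ^ n) x := by
  simp [LinearEquiv.pow_apply, Module.End.pow_apply, ← inv_pow]

theorem center_subspace_subexponential_general {E : Type*} [NormedAddCommGroup E] [NormedSpace ℂ E]
    (T : E ≃ₗ[ℂ] E) (Z : E)
    (hZ : Z ∈ (⨆ (α : ℂ) (_ : ‖α‖ = 1),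
        Module.End.maxGenEigenspace (T.toLinearMap) α)) :
    ∀ a : ℝ, 0 < a → ∀ σ : ℝ, σ ∈ Set.Ioo (0 : ℝ) 1 →
      (Tendsto (fun n : ℤ => ‖(T ^ n : E ≃ₗ[ℂ] E) Z‖ * σ ^ (a * |(n : ℝ)|)) atTop (nhds 0) ∧
       Tendsto (fun n : ℤ => ‖(T ^ n : E ≃ₗ[ℂ] E) Z‖ * σ ^ (a * |(n : ℝ)|)) atBot (nhds 0)) := by
  intro a ha σ ⟨hσ0, hσ1⟩
  have hr0 : 0 ≤ σ ^ a := Real.rpow_nonneg hσ0.le a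
  have hr1 : σ ^ a < 1 := Real.rpow_lt_one hσ0.le hσ1 ha
  have hle : ∀ α : ℂ, ‖α‖ = 1 → ‖α‖ ≤ 1 := fun _ h => h.le
  have hforward := tendsto_norm_pow_apply_mul_pow_of_mem_iSup_maxGenEigenspace
    (SetLike.le_def.mp (biSup_mono hle) hZ) hr0 hr1
  have hbackward := tendsto_norm_pow_apply_mul_pow_of_mem_iSup_maxGenEigenspace
    (SetLike.le_def.mp (biSup_mono hle) (T.iSup_maxGenEigenspace_le_symm hZ)) hr0 hr1
  constructor
  · rw [← Nat.map_cast_int_atTop, tendsto_map'_iff]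
    refine hforward.congr fun n => ?_
    simp [Real.rpow_mul hσ0.le, LinearEquiv.pow_apply, Module.End.pow_apply]
  · rw [← tendsto_comp_neg_atTop_iff, ← Nat.map_cast_int_atTop, tendsto_map'_iff]
    refine hbackward.congr fun n => ?_
    rw [Function.comp_apply, T.zpow_neg_natCast_apply]
    simp [Real.rpow_mul hσ0.le]

/-- Let `T` be a linear isomorphism of a finite-dimensional normed space and
let `Z` belong to the sum of the generalized eigenspaces of `T` for eigenvalues of absolute
value exactly `1`.  Then for every `a > 0` and `σ ∈ (0,1)`, `‖Tⁿ Z‖ · σ^(a |n|) → 0` as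
`n → ± ∞`. -/
theorem center_subspace_subexponential {E : Type*} [NormedAddCommGroup E] [NormedSpace ℂ E]
    [FiniteDimensional ℂ E] (T : E ≃ₗ[ℂ] E) (Z : E)
    (hZ : Z ∈ (⨆ (α : ℂ) (_ : ‖α‖ = 1),
        Module.End.maxGenEigenspace (T.toLinearMap) α)) :
    ∀ a : ℝ, 0 < a → ∀ σ : ℝ, σ ∈ Set.Ioo (0 : ℝ) 1 →
      (Tendsto (fun n : ℤ => ‖(T ^ n : E ≃ₗ[ℂ] E) Z‖ * σ ^ (a * |(n : ℝ)|)) atTop (nhds 0) ∧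
       Tendsto (fun n : ℤ => ‖(T ^ n : E ≃ₗ[ℂ] E) Z‖ * σ ^ (a * |(n : ℝ)|)) atBot (nhds 0)) :=
  center_subspace_subexponential_general T Z hZ
end

section
/- Let f₀ be an automorphism of a Lie group G with stable subalgebra 𝔤⁻ (the sum of generalized eigenspaces of (df₀)_e for eigenvalues of modulus < 1). Then for every X ∈ 𝔤⁻, ad(X) : 𝔤 → 𝔤 is a nilpotent linear map, and tr(ad(X)) = 0. -/
/-!
A Lie automorphism `T` satisfies `(T - αβ)⁅x, y⁆ = ⁅(T - α)x, Ty⁆ + α⁅x, (T - β)y⁆`, so the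
bracket of generalized eigenvectors for `α` and `β` is a generalized eigenvector for `αβ`.
Hence the subspaces `W c`, spanned by the generalized eigenspaces whose eigenvalue has modulus
`≤ c`, satisfy `⁅W a, W b⁆ ⊆ W (a * b)`. The stable subalgebra lies in `W r` for some `r < 1`,
so `ad X` maps `W c` into `W (r * c)`. Since `W c` is everything for large `c` and vanishes for
`c` below the smallest modulus of an eigenvalue (all are nonzero as `T` is invertible), a power
of `ad X` is zero; a nilpotent endomorphism has trace zero.
-/

open Filter Topology NNReal

namespace Module.End

theorem isNilpotent_of_map_le_mul {R M : Type*} [Semiring R] [AddCommMonoid M] [Module R M]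
    (W : ℝ≥0 → Submodule R M) {φ : End R M} {r c : ℝ≥0} (hr : r < 1) (htop : W c = ⊤)
    (hbot : ∀ᶠ t in 𝓝 0, W t = ⊥) (hφ : ∀ t, (W t).map φ ≤ W (r * t)) : IsNilpotent φ := by
  have hpow : ∀ k t, (W t).map (φ ^ k) ≤ W (r ^ k * t) := by
    intro k
    induction k with
    | zero => intro t; rw [pow_zero, pow_zero, one_mul, one_eq_id, Submodule.map_id]
    | succ k ih =>
      intro t
      rw [pow_succ', mul_eq_comp, Submodule.map_comp, pow_succ', mul_assoc]
      exact (Submodule.map_mono (ih t)).trans (hφ _)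
  have hlim : Tendsto (fun k => r ^ k * c) atTop (𝓝 0) := by
    simpa using (NNReal.tendsto_pow_atTop_nhds_zero_of_lt_one hr).mul_const c
  obtain ⟨k, hk⟩ := (hlim.eventually hbot).exists
  refine ⟨k, LinearMap.range_eq_bot.1 (eq_bot_iff.2 ?_)⟩
  rw [LinearMap.range_eq_map, ← htop, ← hk]
  exact hpow k c

section Bilinear

variable {R M N P : Type*} [CommRing R] [AddCommGroup M] [AddCommGroup N] [AddCommGroup P]
  [Module R M] [Module R N] [Module R P]

theorem apply_mem_maxGenEigenspace_mul (B : M →ₗ[R] N →ₗ[R] P) {f : End R M} {g : End R N}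
    {h : End R P} (hB : ∀ x y, h (B x y) = B (f x) (g y)) {α β : R} {x : M} {y : N}
    (hx : x ∈ f.maxGenEigenspace α) (hy : y ∈ g.maxGenEigenspace β) :
    B x y ∈ h.maxGenEigenspace (α * β) := by
  set Df := f - α • (1 : End R M)
  set Dg := g - β • (1 : End R N)
  set Dh := h - (α * β) • (1 : End R P)
  have leibniz : ∀ x y, Dh (B x y) = B (Df x) (g y) + α • B x (Dg y) := by
    intro x y
    simp only [Df, Dg, Dh, LinearMap.sub_apply, LinearMap.smul_apply, one_apply, hB, map_sub,
      map_smul, mul_smul, smul_sub]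
    abel
  have comm : ∀ n y, (Dg ^ n) (g y) = g ((Dg ^ n) y) := fun n y =>
    LinearMap.congr_fun
      (((Commute.refl g).sub_left ((Commute.one_left g).smul_left β)).pow_left n).eq y
  suffices key : ∀ m n x y, (Df ^ m) x = 0 → (Dg ^ n) y = 0 → (Dh ^ (m + n)) (B x y) = 0 by
    obtain ⟨m, hm⟩ := (f.mem_maxGenEigenspace α x).1 hx
    obtain ⟨n, hn⟩ := (g.mem_maxGenEigenspace β y).1 hy
    exact (h.mem_maxGenEigenspace _ _).2 ⟨m + n, key m n x y hm hn⟩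
  intro m
  induction m with
  | zero => intro n x y hx _; simp_all
  | succ m ihm =>
    intro n
    induction n with
    | zero => intro x y _ hy; simp_all
    | succ n ihn =>
      intro x y hx hy
      have hfx : (Df ^ m) (Df x) = 0 := by rwa [← mul_apply, ← pow_succ]
      have hgy : (Dg ^ (n + 1)) (g y) = 0 := by rw [comm, hy, map_zero]
      have hdy : (Dg ^ n) (Dg y) = 0 := by rwa [← mul_apply, ← pow_succ]
      rw [show m + 1 + (n + 1) = m + (n + 1) + 1 by omega, pow_succ, mul_apply, leibniz,
        map_add, map_smul, ihm (n + 1) _ _ hfx hgy, show m + (n + 1) = m + 1 + n by omega,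
        ihn _ _ hx hdy, smul_zero, add_zero]

end Bilinear

section NormFiltration

variable {K V : Type*} [NormedField K] [AddCommGroup V] [Module K V]

def maxGenEigenspaceNormLE (f : End K V) (c : ℝ≥0) : Submodule K V :=
  ⨆ (μ : K) (_ : ‖μ‖₊ ≤ c), f.maxGenEigenspace μ

theorem maxGenEigenspace_le_maxGenEigenspaceNormLE (f : End K V) {μ : K} {c : ℝ≥0}
    (h : ‖μ‖₊ ≤ c) : f.maxGenEigenspace μ ≤ f.maxGenEigenspaceNormLE c :=
  le_iSup₂ (f := fun (μ : K) (_ : ‖μ‖₊ ≤ c) => f.maxGenEigenspace μ) μ h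

theorem map₂_maxGenEigenspaceNormLE_le {M N : Type*} [AddCommGroup M] [AddCommGroup N]
    [Module K M] [Module K N] (B : M →ₗ[K] N →ₗ[K] V) {f : End K M} {g : End K N}
    {h : End K V} (hB : ∀ x y, h (B x y) = B (f x) (g y)) (a b : ℝ≥0) :
    Submodule.map₂ B (f.maxGenEigenspaceNormLE a) (g.maxGenEigenspaceNormLE b) ≤
      h.maxGenEigenspaceNormLE (a * b) := by
  simp only [maxGenEigenspaceNormLE, Submodule.map₂_iSup_left, Submodule.map₂_iSup_right]
  refine iSup₂_le fun β hβ => iSup₂_le fun α hα => Submodule.map₂_le.2 fun x hx y hy => ?_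
  refine h.maxGenEigenspace_le_maxGenEigenspaceNormLE ?_
    (apply_mem_maxGenEigenspace_mul B hB hx hy)
  rw [nnnorm_mul]
  exact mul_le_mul' hα hβ

variable [FiniteDimensional K V]

theorem finite_maxGenEigenspace_ne_bot (f : End K V) :
    {μ | f.maxGenEigenspace μ ≠ ⊥}.Finite :=
  f.finite_hasEigenvalue.subset fun _ hμ => HasUnifEigenvalue.lt zero_lt_one hμ

theorem eventually_maxGenEigenspaceNormLE_eq_bot {f : End K V} (hf : Function.Injective f) :
    ∀ᶠ c in 𝓝 0, f.maxGenEigenspaceNormLE c = ⊥ := by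
  have hpos : ∀ μ ∈ {μ | f.maxGenEigenspace μ ≠ ⊥}, ∀ᶠ c in 𝓝 0, c < ‖μ‖₊ := by
    intro μ hμ
    refine eventually_lt_nhds (nnnorm_pos.2 ?_)
    rintro rfl
    have h0 : f.HasEigenvalue 0 := HasUnifEigenvalue.lt zero_lt_one hμ
    obtain ⟨v, hv⟩ := h0.exists_hasEigenvector
    exact hv.2 (hf (by simpa using hv.apply_eq_smul))
  filter_upwards [(f.finite_maxGenEigenspace_ne_bot.eventually_all).2 hpos] with c hc
  refine eq_bot_iff.2 (iSup₂_le fun μ hμ => ?_)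
  by_contra hne
  exact (hc μ fun h => hne h.le).not_ge hμ

theorem exists_lt_one_iSup_maxGenEigenspace_le (f : End K V) :
    ∃ r < 1, ⨆ (μ : K) (_ : ‖μ‖ < 1), f.maxGenEigenspace μ ≤ f.maxGenEigenspaceNormLE r := by
  have hfin := f.finite_maxGenEigenspace_ne_bot.inter_of_left {μ | ‖μ‖ < 1}
  refine ⟨hfin.toFinset.sup (‖·‖₊), Finset.sup_lt_iff zero_lt_one |>.2 fun μ hμ => ?_,
    iSup₂_le fun μ hμ => ?_⟩
  · exact_mod_cast (hfin.mem_toFinset.1 hμ).2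
  by_cases hbot : f.maxGenEigenspace μ = ⊥
  · simp [hbot]
  · exact f.maxGenEigenspace_le_maxGenEigenspaceNormLE
      (Finset.le_sup (f := (‖·‖₊)) (hfin.mem_toFinset.2 ⟨hbot, hμ⟩))

theorem exists_maxGenEigenspaceNormLE_eq_top [IsAlgClosed K] (f : End K V) :
    ∃ c, f.maxGenEigenspaceNormLE c = ⊤ := by
  obtain ⟨c, hc⟩ := (f.finite_maxGenEigenspace_ne_bot.image (‖·‖₊)).bddAbove
  refine ⟨c, top_unique ?_⟩
  rw [← f.iSup_maxGenEigenspace_eq_top]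
  refine iSup_le fun μ => ?_
  by_cases hbot : f.maxGenEigenspace μ = ⊥
  · simp [hbot]
  · exact f.maxGenEigenspace_le_maxGenEigenspaceNormLE (hc ⟨μ, hbot, rfl⟩)

end NormFiltration

end Module.End

/-- Let `f₀` be an automorphism of a Lie group `G` with stable subalgebra
`𝔤⁻` (the sum of the generalized eigenspaces of `T = (df₀)_e` for eigenvalues of modulus
`< 1`).  Then for every `X ∈ 𝔤⁻`, `ad X : 𝔤 → 𝔤` is a nilpotent linear map and
`tr (ad X) = 0`. -/
theorem ad_nilpotent_trace_zero_on_stable {L : Type*} [LieRing L] [LieAlgebra ℂ L]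
    [FiniteDimensional ℂ L] (T : L ≃ₗ⁅ℂ⁆ L) :
    ∀ X ∈ (⨆ (α : ℂ) (_ : ‖α‖ < 1),
        Module.End.maxGenEigenspace (T.toLinearEquiv : L →ₗ[ℂ] L) α),
      IsNilpotent (LieAlgebra.ad ℂ L X) ∧
      LinearMap.trace ℂ L (LieAlgebra.ad ℂ L X) = 0 := by
  intro X hX
  set S : Module.End ℂ L := (T.toLinearEquiv : L →ₗ[ℂ] L)
  obtain ⟨r, hr, hstable⟩ := S.exists_lt_one_iSup_maxGenEigenspace_le
  obtain ⟨c, htop⟩ := S.exists_maxGenEigenspaceNormLE_eq_top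
  have hnil : IsNilpotent (LieAlgebra.ad ℂ L X) := by
    refine Module.End.isNilpotent_of_map_le_mul S.maxGenEigenspaceNormLE hr htop
      (Module.End.eventually_maxGenEigenspaceNormLE_eq_bot T.injective) fun t => ?_
    rintro _ ⟨v, hv, rfl⟩
    have hbracket := Module.End.map₂_maxGenEigenspaceNormLE_le
      (LieAlgebra.ad ℂ L : L →ₗ[ℂ] Module.End ℂ L) (f := S) (g := S) (h := S) T.map_lie r t
    exact hbracket (Submodule.apply_mem_map₂ _ (hstable hX) hv)
  exact ⟨hnil, (LinearMap.isNilpotent_trace_of_isNilpotent hnil).eq_zero⟩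
end
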